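/- arXiv:math/0701124 — 2 statements merged into one kernel-verified Lean document; each statement's English description precedes it below -/
import Mathlib

section
/- Let Σ₀ be a p×p symmetric positive definite matrix, F a K×K symmetric positive definite matrix, B a p×K real matrix, and Σ = Σ₀ + B F B'. Then F⁻¹ (F⁻¹ + B'Σ₀⁻¹B)⁻¹ F⁻¹ ≼ F⁻¹ in the Loewner order (i.e. F⁻¹ − F⁻¹(F⁻¹ + B'Σ₀⁻¹B)⁻¹F⁻¹ is positive semidefinite), and consequently ‖B'Σ⁻¹B‖ ≤ 2‖F⁻¹‖, where ‖·‖ is the Frobenius norm. -/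
/-!
By Woodbury, `Bᵀ Σ⁻¹ B = F⁻¹ - F⁻¹ (F⁻¹ + Bᵀ Σ₀⁻¹ B)⁻¹ F⁻¹`; the left side is positive semidefinite,
which is the Loewner bound. Thus `F⁻¹ = X + D` with `X = Bᵀ Σ⁻¹ B` and `D = F⁻¹ (F⁻¹ + Bᵀ Σ₀⁻¹ B)⁻¹ F⁻¹`
both positive semidefinite, and `‖X + D‖² = ‖X‖² + 2 tr (X D) + ‖D‖² ≥ ‖X‖²` because the trace of a
product of positive semidefinite matrices is nonnegative. This even gives `‖X‖ ≤ ‖F⁻¹‖`.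
-/

open Matrix

noncomputable section

def frob {m k : ℕ} (A : Matrix (Fin m) (Fin k) ℝ) : ℝ :=
  Real.sqrt ((A * Aᵀ).trace)

namespace Matrix

section Woodbury

variable {m n R : Type*} [Fintype m] [DecidableEq m] [Fintype n] [DecidableEq n] [CommRing R]

theorem sub_mul_inv_add_mul_comm (A M : Matrix n n R) (h : IsUnit (A + M)) :
    M - M * (A + M)⁻¹ * M = A - A * (A + M)⁻¹ * A := by
  have hdet := (isUnit_iff_isUnit_det _).1 h
  calc M - M * (A + M)⁻¹ * M = M * (A + M)⁻¹ * (A + M - M) := by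
        rw [mul_sub, Matrix.mul_assoc M _ (A + M), nonsing_inv_mul _ hdet, mul_one]
    _ = (A + M - A) * (A + M)⁻¹ * A := by
        simp only [add_sub_cancel_left, add_sub_cancel_right]
    _ = A - A * (A + M)⁻¹ * A := by
        rw [sub_mul, sub_mul, mul_nonsing_inv _ hdet, one_mul]

theorem mul_add_mul_mul_inv_mul_eq_sub (A : Matrix m m R) (U : Matrix m n R) (C : Matrix n n R)
    (V : Matrix n m R) (hA : IsUnit A) (hC : IsUnit C) (hN : IsUnit (C⁻¹ + V * A⁻¹ * U)) :
    V * (A + U * C * V)⁻¹ * U = C⁻¹ - C⁻¹ * (C⁻¹ + V * A⁻¹ * U)⁻¹ * C⁻¹ := by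
  rw [add_mul_mul_inv_eq_sub A U C V hA hC hN, ← sub_mul_inv_add_mul_comm _ _ hN]
  simp only [Matrix.mul_sub, Matrix.sub_mul, Matrix.mul_assoc]

end Woodbury

open scoped ComplexOrder MatrixOrder in
theorem PosSemidef.trace_mul_nonneg {n 𝕜 : Type*} [Fintype n] [RCLike 𝕜] {X D : Matrix n n 𝕜}
    (hX : X.PosSemidef) (hD : D.PosSemidef) : 0 ≤ (X * D).trace := by
  classical
  obtain ⟨Y, rfl⟩ := CStarAlgebra.nonneg_iff_eq_star_mul_self.mp hX.nonneg
  rw [Matrix.mul_assoc, trace_mul_comm]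
  exact (hD.mul_mul_conjTranspose_same Y).trace_nonneg

end Matrix

theorem frob_le_frob_add_of_posSemidef {n : ℕ} {X D : Matrix (Fin n) (Fin n) ℝ}
    (hX : X.PosSemidef) (hD : D.PosSemidef) : frob X ≤ frob (X + D) := by
  have hXD := hX.trace_mul_nonneg hD
  have hDD := hD.trace_mul_nonneg hD
  have hXsymm : Xᵀ = X := hX.1
  have hDsymm : Dᵀ = D := hD.1
  unfold frob
  rw [transpose_add, hXsymm, hDsymm]
  apply Real.sqrt_le_sqrt
  rw [add_mul, mul_add, mul_add, trace_add, trace_add, trace_add, trace_mul_comm D X]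
  linarith

/-- **Bound (2.12) in Fan–Fan–Lv.** If `Σ₀` and `F` are symmetric positive definite
and `Σ = Σ₀ + B F Bᵀ`, then `F⁻¹(F⁻¹ + BᵀΣ₀⁻¹B)⁻¹F⁻¹ ≼ F⁻¹` in the Loewner order,
and consequently `‖BᵀΣ⁻¹B‖ ≤ 2‖F⁻¹‖`. -/
theorem BSigmaInvB_frob_bound (p K : ℕ)
    (S0 : Matrix (Fin p) (Fin p) ℝ) (hS0 : S0.PosDef)
    (F : Matrix (Fin K) (Fin K) ℝ) (hF : F.PosDef)
    (B : Matrix (Fin p) (Fin K) ℝ) :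
    (F⁻¹ - F⁻¹ * (F⁻¹ + Bᵀ * S0⁻¹ * B)⁻¹ * F⁻¹).PosSemidef ∧
    frob (Bᵀ * (S0 + B * F * Bᵀ)⁻¹ * B) ≤ 2 * frob F⁻¹ := by
  have hBt : Bᴴ = Bᵀ := conjTranspose_eq_transpose_of_trivial B
  have hN : (F⁻¹ + Bᵀ * S0⁻¹ * B).PosDef :=
    hF.inv.add_posSemidef (hBt ▸ hS0.inv.posSemidef.conjTranspose_mul_mul_same B)
  have hSigma : (S0 + B * F * Bᵀ).PosDef :=
    hS0.add_posSemidef (hBt ▸ hF.posSemidef.mul_mul_conjTranspose_same B)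
  have hX : (Bᵀ * (S0 + B * F * Bᵀ)⁻¹ * B).PosSemidef :=
    hBt ▸ hSigma.inv.posSemidef.conjTranspose_mul_mul_same B
  have hD : (F⁻¹ * (F⁻¹ + Bᵀ * S0⁻¹ * B)⁻¹ * F⁻¹).PosSemidef := by
    simpa only [hF.inv.isHermitian.eq] using hN.inv.posSemidef.conjTranspose_mul_mul_same F⁻¹
  have hWoodbury := mul_add_mul_mul_inv_mul_eq_sub S0 B F Bᵀ hS0.isUnit hF.isUnit hN.isUnit
  refine ⟨hWoodbury ▸ hX, ?_⟩
  calc frob (Bᵀ * (S0 + B * F * Bᵀ)⁻¹ * B)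
      ≤ frob (Bᵀ * (S0 + B * F * Bᵀ)⁻¹ * B + F⁻¹ * (F⁻¹ + Bᵀ * S0⁻¹ * B)⁻¹ * F⁻¹) :=
        frob_le_frob_add_of_posSemidef hX hD
    _ = frob F⁻¹ := by rw [hWoodbury, sub_add_cancel]
    _ ≤ 2 * frob F⁻¹ := by linarith [show 0 ≤ frob F⁻¹ from Real.sqrt_nonneg _]

end
end

section
/- Let Σ₀ be a p×p symmetric positive definite matrix, F a K×K symmetric positive definite matrix, B a p×K real matrix, and Σ = Σ₀ + B F B'. Then Σ₀^{-1/2} B (F⁻¹ + B'Σ₀⁻¹B)⁻¹ B' Σ₀^{-1/2} = I_p − Σ₀^{1/2} Σ⁻¹ Σ₀^{1/2}; this matrix is symmetric positive semidefinite, has rank at most K, all its eigenvalues lie in [0, 1], and its Frobenius norm is at most K^{1/2}. -/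
open Matrix

noncomputable section

open scoped Classical in
/-- The positive semidefinite square root of a matrix (junk value `0` if the
matrix is not positive semidefinite). -/
def matSqrt {d : ℕ} (A : Matrix (Fin d) (Fin d) ℝ) : Matrix (Fin d) (Fin d) ℝ :=
  if h : A.PosSemidef then
    (h.1.eigenvectorUnitary : Matrix (Fin d) (Fin d) ℝ) *
      diagonal ((↑) ∘ (√·) ∘ h.1.eigenvalues) *
      (star h.1.eigenvectorUnitary : Matrix (Fin d) (Fin d) ℝ)
  else 0

/-!
Put `Q = Σ₀^{1/2}`, `C = Q⁻¹ B` and `G = F⁻¹ + CᵀC = F⁻¹ + BᵀΣ₀⁻¹B`, so that the matrix in question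
is `M = C G⁻¹ Cᵀ`: it is positive semidefinite of rank at most `K`. The Woodbury identity for
`(Σ₀ + B F Bᵀ)⁻¹`, conjugated by `Q`, is the claimed identity, and it exhibits `I - M` as the
positive semidefinite matrix `Q Σ⁻¹ Q`. For the norm, `tr M = tr (G⁻¹ (G - F⁻¹)) = K - tr (G⁻¹ F⁻¹)
≤ K`, and `0 ≼ M ≼ I` gives `‖M‖² = tr (M²) ≤ tr M`.
-/

open scoped MatrixOrder ComplexOrder

namespace Matrix

variable {n m : Type*} [Fintype n] [Fintype m]

theorem PosSemidef.trace_mul_nonneg_s17 {𝕜 : Type*} [RCLike 𝕜] {A B : Matrix n n 𝕜}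
    (hA : A.PosSemidef) (hB : B.PosSemidef) : 0 ≤ (A * B).trace := by
  classical
  obtain ⟨X, rfl⟩ := CStarAlgebra.nonneg_iff_eq_star_mul_self.mp hA.nonneg
  rw [star_eq_conjTranspose, Matrix.mul_assoc, trace_mul_comm]
  exact (hB.mul_mul_conjTranspose_same X).trace_nonneg

theorem PosSemidef.trace_mul_self_le_trace {𝕜 : Type*} [RCLike 𝕜] [DecidableEq n]
    {A : Matrix n n 𝕜} (hA : A.PosSemidef) (hA₁ : (1 - A).PosSemidef) :
    (A * A).trace ≤ A.trace :=
  sub_nonneg.mp <| by simpa [Matrix.mul_sub, trace_sub] using hA.trace_mul_nonneg_s17 hA₁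

theorem PosSemidef.mul_mul_transpose_same {A : Matrix n n ℝ} (hA : A.PosSemidef)
    (B : Matrix m n ℝ) : (B * A * Bᵀ).PosSemidef := by
  simpa using hA.mul_mul_conjTranspose_same B

theorem PosSemidef.transpose_mul_mul_same {A : Matrix n n ℝ} (hA : A.PosSemidef)
    (B : Matrix n m ℝ) : (Bᵀ * A * B).PosSemidef := by
  simpa using hA.conjTranspose_mul_mul_same B

theorem rank_mul_mul_transpose_le (C : Matrix n m ℝ) (W : Matrix m m ℝ) :
    (C * W * Cᵀ).rank ≤ Fintype.card m :=
  calc (C * W * Cᵀ).rank ≤ (C * W).rank := rank_mul_le_left _ _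
    _ ≤ C.rank := rank_mul_le_left _ _
    _ ≤ Fintype.card m := rank_le_card_width C

variable [DecidableEq m]

theorem posDef_inv_add_transpose_mul_self {F : Matrix m m ℝ} (hF : F.PosDef)
    (C : Matrix n m ℝ) : (F⁻¹ + Cᵀ * C).PosDef := by
  simpa using hF.inv.add_posSemidef (posSemidef_conjTranspose_mul_self C)

theorem trace_mul_inv_add_transpose_mul_self_le {F : Matrix m m ℝ} (hF : F.PosDef)
    (C : Matrix n m ℝ) : (C * (F⁻¹ + Cᵀ * C)⁻¹ * Cᵀ).trace ≤ Fintype.card m := by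
  set G := F⁻¹ + Cᵀ * C
  have hG : G.PosDef := posDef_inv_add_transpose_mul_self hF C
  have hGF : 0 ≤ (G⁻¹ * F⁻¹).trace := hG.inv.posSemidef.trace_mul_nonneg_s17 hF.inv.posSemidef
  calc (C * G⁻¹ * Cᵀ).trace = (G⁻¹ * (G - F⁻¹)).trace := by
        rw [trace_mul_cycle, trace_mul_comm, show G - F⁻¹ = Cᵀ * C from add_sub_cancel_left _ _]
    _ = Fintype.card m - (G⁻¹ * F⁻¹).trace := by
        rw [Matrix.mul_sub, nonsing_inv_mul _ hG.det_pos.ne'.isUnit, trace_sub, trace_one]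
    _ ≤ Fintype.card m := by linarith

theorem conj_inv_add_mul_inv_mul_eq_one_sub {α : Type*} [CommRing α] [DecidableEq n]
    {A Q : Matrix n n α} (hQQ : Q * Q = A) (hQ : IsUnit Q) {C : Matrix m m α} (hC : IsUnit C)
    (U : Matrix n m α) (V : Matrix m n α) (hG : IsUnit (C⁻¹ + V * A⁻¹ * U)) :
    Q⁻¹ * U * (C⁻¹ + V * A⁻¹ * U)⁻¹ * V * Q⁻¹ = 1 - Q * (A + U * C * V)⁻¹ * Q := by
  subst hQQ
  have hQ' : IsUnit Q.det := (isUnit_iff_isUnit_det Q).mp hQ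
  rw [add_mul_mul_inv_eq_sub _ U C V (hQ.mul hQ) hC hG, Matrix.mul_inv_rev]
  simp only [Matrix.mul_sub, Matrix.sub_mul, Matrix.mul_assoc, mul_nonsing_inv_cancel_left _ _ hQ',
    nonsing_inv_mul _ hQ', Matrix.mul_one, sub_sub_cancel]

theorem conj_inv_add_transpose_mul_inv_mul_eq {α : Type*} [CommRing α] [DecidableEq n]
    {A Q : Matrix n n α} (hQt : Qᵀ = Q) (hQQ : Q * Q = A) (B : Matrix n m α)
    (F : Matrix m m α) :
    Q⁻¹ * B * (F⁻¹ + Bᵀ * A⁻¹ * B)⁻¹ * Bᵀ * Q⁻¹ =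
      Q⁻¹ * B * (F⁻¹ + (Q⁻¹ * B)ᵀ * (Q⁻¹ * B))⁻¹ * (Q⁻¹ * B)ᵀ := by
  subst hQQ
  rw [transpose_mul, transpose_nonsing_inv, hQt, Matrix.mul_inv_rev]
  simp only [Matrix.mul_assoc]

end Matrix

theorem matSqrt_eq_sqrt {d : ℕ} {A : Matrix (Fin d) (Fin d) ℝ} (hA : A.PosSemidef) :
    matSqrt A = CFC.sqrt A := by
  rw [matSqrt, dif_pos hA, CFC.sqrt_eq_cfc, cfc_nnreal_eq_real _ A, hA.1.cfc_eq,
    IsHermitian.cfc, Unitary.conjStarAlgAut_apply]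
  congr 3
  funext i
  simp [max_eq_left (hA.eigenvalues_nonneg i)]

theorem matSqrt_mul_self {d : ℕ} {A : Matrix (Fin d) (Fin d) ℝ} (hA : A.PosSemidef) :
    matSqrt A * matSqrt A = A := by
  rw [matSqrt_eq_sqrt hA]
  exact CFC.sqrt_mul_sqrt_self A hA.nonneg

theorem posDef_matSqrt {d : ℕ} {A : Matrix (Fin d) (Fin d) ℝ} (hA : A.PosDef) :
    (matSqrt A).PosDef := by
  rw [matSqrt_eq_sqrt hA.posSemidef]
  exact (IsStrictlyPositive.sqrt A hA.isStrictlyPositive).posDef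

theorem frob_le_sqrt_of_posSemidef {d : ℕ} {A : Matrix (Fin d) (Fin d) ℝ} (hA : A.PosSemidef)
    (hA₁ : (1 - A).PosSemidef) {r : ℝ} (hr : A.trace ≤ r) : frob A ≤ √r := by
  have hAt : Aᵀ = A := by simpa using hA.isHermitian.eq
  rw [frob, hAt]
  exact Real.sqrt_le_sqrt ((hA.trace_mul_self_le_trace hA₁).trans hr)

/-- **Fan–Fan–Lv, proof of Theorem 3.** If `Σ₀`, `F` are symmetric positive definite
and `Σ = Σ₀ + B F Bᵀ`, then
`Σ₀^{-1/2} B (F⁻¹ + BᵀΣ₀⁻¹B)⁻¹ Bᵀ Σ₀^{-1/2} = I − Σ₀^{1/2} Σ⁻¹ Σ₀^{1/2}`;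
this matrix is symmetric positive semidefinite of rank at most `K`, its eigenvalues
lie in `[0,1]` (equivalently, `0 ≼ M ≼ I` in the Loewner order), and its Frobenius
norm is at most `K^{1/2}`. -/
theorem sandwich_identity_rank_bound (p K : ℕ)
    (S0 : Matrix (Fin p) (Fin p) ℝ) (hS0 : S0.PosDef)
    (F : Matrix (Fin K) (Fin K) ℝ) (hF : F.PosDef)
    (B : Matrix (Fin p) (Fin K) ℝ) :
    (matSqrt S0)⁻¹ * B * (F⁻¹ + Bᵀ * S0⁻¹ * B)⁻¹ * Bᵀ * (matSqrt S0)⁻¹ =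
      1 - matSqrt S0 * (S0 + B * F * Bᵀ)⁻¹ * matSqrt S0 ∧
    ((matSqrt S0)⁻¹ * B * (F⁻¹ + Bᵀ * S0⁻¹ * B)⁻¹ * Bᵀ * (matSqrt S0)⁻¹).PosSemidef ∧
    ((matSqrt S0)⁻¹ * B * (F⁻¹ + Bᵀ * S0⁻¹ * B)⁻¹ * Bᵀ * (matSqrt S0)⁻¹).rank ≤ K ∧
    (1 - (matSqrt S0)⁻¹ * B * (F⁻¹ + Bᵀ * S0⁻¹ * B)⁻¹ * Bᵀ *
      (matSqrt S0)⁻¹).PosSemidef ∧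
    frob ((matSqrt S0)⁻¹ * B * (F⁻¹ + Bᵀ * S0⁻¹ * B)⁻¹ * Bᵀ * (matSqrt S0)⁻¹) ≤
      Real.sqrt K := by
  set Q := matSqrt S0
  have hQ : Q.PosDef := posDef_matSqrt hS0
  have hQQ : Q * Q = S0 := matSqrt_mul_self hS0.posSemidef
  have hQt : Qᵀ = Q := (conjTranspose_eq_transpose_of_trivial Q).symm.trans hQ.isHermitian
  have hG : (F⁻¹ + Bᵀ * S0⁻¹ * B).PosDef :=
    hF.inv.add_posSemidef (hS0.inv.posSemidef.transpose_mul_mul_same B)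
  have hS : (S0 + B * F * Bᵀ).PosSemidef :=
    hS0.posSemidef.add (hF.posSemidef.mul_mul_transpose_same B)
  have hid := conj_inv_add_mul_inv_mul_eq_one_sub hQQ hQ.isUnit hF.isUnit B Bᵀ hG.isUnit
  have hMC := conj_inv_add_transpose_mul_inv_mul_eq hQt hQQ B F
  have hM : (Q⁻¹ * B * (F⁻¹ + Bᵀ * S0⁻¹ * B)⁻¹ * Bᵀ * Q⁻¹).PosSemidef :=
    hMC ▸ (posDef_inv_add_transpose_mul_self hF _).inv.posSemidef.mul_mul_transpose_same _
  have hM₁ : (1 - Q⁻¹ * B * (F⁻¹ + Bᵀ * S0⁻¹ * B)⁻¹ * Bᵀ * Q⁻¹).PosSemidef := by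
    rw [hid, sub_sub_cancel]
    simpa only [hQt] using hS.inv.transpose_mul_mul_same Q
  refine ⟨hid, hM, ?_, hM₁, frob_le_sqrt_of_posSemidef hM hM₁ ?_⟩
  · simpa [hMC] using rank_mul_mul_transpose_le (Q⁻¹ * B) _
  · simpa [hMC] using trace_mul_inv_add_transpose_mul_self_le hF (Q⁻¹ * B)
end
end
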